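/- arXiv:1110.3381 — 5 statements merged into one kernel-verified Lean document; each statement's English description precedes it below -/
import Mathlib

section
/- Let α be a linear order, S a list over α, and e an element of α with e < a for every symbol a occurring in S. Set T = S ++ [e] and N = T.length. Then for all positions i, j < N with i ≠ j, the circular rotation of T starting at position i is lexicographically strictly smaller than the rotation starting at position j if and only if the suffix starting at i is lexicographically strictly smaller than the suffix starting at j: List.Lex (· < ·) (T.rotate i) (T.rotate j) ↔ List.Lex (· < ·) (T.drop i) (T.drop j). -/
/-!
Since `T.rotate i = T.drop i ++ T.take i`, it suffices that the suffixes `T.drop i` and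
`T.drop j` already differ at a position inside both of them: the lexicographic comparison is
then decided before the appended prefixes are reached. For `i < j` such a position is
`|S| - j`, where `T.drop j` holds the endmarker and `T.drop i` a letter of `S`.
-/

namespace List

variable {α : Type*}

theorem lex_append_append_iff_of_getElem_ne {r : α → α → Prop} {l₁ l₂ : List α}
    (s₁ s₂ : List α) {k : ℕ} (h₁ : k < l₁.length) (h₂ : k < l₂.length)
    (hne : l₁[k] ≠ l₂[k]) : Lex r (l₁ ++ s₁) (l₂ ++ s₂) ↔ Lex r l₁ l₂ := by
  induction l₁ generalizing l₂ k with
  | nil => simp at h₁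
  | cons a t₁ ih =>
    cases l₂ with
    | nil => simp at h₂
    | cons b t₂ =>
      cases k with
      | zero =>
        simp only [getElem_cons_zero] at hne
        simp [cons_lex_cons_iff, hne]
      | succ k =>
        simp only [cons_append, cons_lex_cons_iff,
          ih (by simpa using h₁) (by simpa using h₂) (by simpa using hne)]

theorem exists_getElem_drop_ne_of_not_mem {S : List α} {e : α} (he : e ∉ S) {i j : ℕ}
    (hij : i < j) (hj : j ≤ S.length) :
    ∃ (k : ℕ) (h₁ : k < ((S ++ [e]).drop i).length) (h₂ : k < ((S ++ [e]).drop j).length),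
      ((S ++ [e]).drop i)[k] ≠ ((S ++ [e]).drop j)[k] := by
  have hlen (n : ℕ) : ((S ++ [e]).drop n).length = S.length + 1 - n := by simp
  refine ⟨S.length - j, by rw [hlen]; omega, by rw [hlen]; omega, ?_⟩
  have hS : i + (S.length - j) < S.length := by omega
  have hend : j + (S.length - j) = S.length := by omega
  simp only [getElem_drop, hend, getElem_append_left hS, getElem_concat_length]
  exact fun h => he (h ▸ getElem_mem hS)

end List

/-- For a text `T = S ++ [e]` ending with an endmarker `e` strictly smaller than every
symbol of `S`, comparing circular rotations of `T` lexicographically is the same as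
comparing the corresponding suffixes of `T`. -/
theorem rotate_lex_iff_drop_lex {α : Type*} [LinearOrder α] (S : List α) (e : α)
    (he : ∀ a ∈ S, e < a) (i j : ℕ)
    (hi : i < (S ++ [e]).length) (hj : j < (S ++ [e]).length) (hij : i ≠ j) :
    (List.Lex (· < ·) ((S ++ [e]).rotate i) ((S ++ [e]).rotate j) ↔
      List.Lex (· < ·) ((S ++ [e]).drop i) ((S ++ [e]).drop j)) := by
  have he' : e ∉ S := fun h => lt_irrefl e (he e h)
  have hi' : i ≤ S.length := by simpa [Nat.lt_succ_iff] using hi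
  have hj' : j ≤ S.length := by simpa [Nat.lt_succ_iff] using hj
  rw [List.rotate_eq_drop_append_take hi.le, List.rotate_eq_drop_append_take hj.le]
  rcases hij.lt_or_gt with h | h
  · obtain ⟨k, h₁, h₂, hne⟩ := List.exists_getElem_drop_ne_of_not_mem he' h hj'
    exact List.lex_append_append_iff_of_getElem_ne _ _ h₁ h₂ hne
  · obtain ⟨k, h₂, h₁, hne⟩ := List.exists_getElem_drop_ne_of_not_mem he' h hi'
    exact List.lex_append_append_iff_of_getElem_ne _ _ h₁ h₂ hne.symm
end

section
/- Let α be a linear order, S a list over α, and e an element of α with e < a for every symbol a occurring in S. Set T = S ++ [e] and N = T.length. Let σ : Fin N → Fin N be a bijection such that for all r < r', List.Lex (· < ·) (T.drop (σ r)) (T.drop (σ r')) (the suffix array of T). Then: (1) the circular rotations of T taken in suffix-array order are strictly lexicographically increasing, i.e. for all r < r', List.Lex (· < ·) (T.rotate (σ r)) (T.rotate (σ r')); so the r-th lexicographically smallest rotation of T is T.rotate (σ r); and (2) the last symbol of T.rotate (σ r) is the symbol of T at position (σ r + N − 1) mod N. Hence the r-th symbol of the Burrows–Wheeler transform L of T is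 the symbol of T preceding (cyclically) the suffix of rank r + 1. -/
private lemma lex_irrefl' {α : Type*} [LinearOrder α] (l : List α)
    (h : List.Lex (· < ·) l l) : False := by
  induction l with
  | nil => cases h
  | cons a t ih => cases h with
    | rel h => exact lt_irrefl a h
    | cons h => exact ih h

private lemma lex_append' {α : Type*} [LinearOrder α] :
    ∀ {a b : List α}, List.Lex (· < ·) a b → ¬ a <+: b →
      ∀ u v : List α, List.Lex (· < ·) (a ++ u) (b ++ v) := by
  intro a b h
  induction h with
  | nil => intro hp u v; exact absurd List.nil_prefix hp
  | rel h => intro hp u v; exact List.Lex.rel h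
  | @cons x l₁ l₂ h ih =>
    intro hp u v
    exact List.Lex.cons (ih (fun hpre => hp (List.cons_prefix_cons.mpr ⟨rfl, hpre⟩)) u v)

/-- Given the suffix array `σ` of a text `T = S ++ [e]` with endmarker `e`, (1) the
circular rotations of `T` taken in suffix-array order are strictly lexicographically
increasing, and (2) the last symbol of the rotation `T.rotate (σ r)` is the symbol of `T`
at position `(σ r + N - 1) % N`; hence the `r`-th symbol of the Burrows–Wheeler transform
of `T` is the symbol cyclically preceding the suffix of rank `r + 1`. -/
theorem bwt_from_suffix_array {α : Type*} [LinearOrder α] (S : List α) (e : α)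
    (he : ∀ a ∈ S, e < a)
    (σ : Fin (S ++ [e]).length → Fin (S ++ [e]).length)
    (hσ : Function.Bijective σ)
    (hsort : ∀ r r' : Fin (S ++ [e]).length, r < r' →
      List.Lex (· < ·) ((S ++ [e]).drop (σ r)) ((S ++ [e]).drop (σ r'))) :
    (∀ r r' : Fin (S ++ [e]).length, r < r' →
      List.Lex (· < ·) ((S ++ [e]).rotate (σ r)) ((S ++ [e]).rotate (σ r'))) ∧
    (∀ r : Fin (S ++ [e]).length,
      ((S ++ [e]).rotate (σ r)).getLast? =
        (S ++ [e])[((σ r : ℕ) + (S ++ [e]).length - 1) % (S ++ [e]).length]?) := by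
  have hN : (S ++ [e]).length = S.length + 1 := by simp
  have hlast : ∀ (h : S.length < (S ++ [e]).length), (S ++ [e])[S.length] = e := by
    intro h; simp
  -- no suffix is a prefix of a lexicographically larger suffix
  have key : ∀ i j : Fin (S ++ [e]).length,
      List.Lex (· < ·) ((S ++ [e]).drop i) ((S ++ [e]).drop j) →
      ¬ (S ++ [e]).drop i <+: (S ++ [e]).drop j := by
    intro i j hlex hp
    rcases lt_or_ge (j : ℕ) (i : ℕ) with hji | hij
    · have hi : (i : ℕ) < (S ++ [e]).length := i.isLt
      have hpos : (S ++ [e]).length - 1 - i < ((S ++ [e]).drop i).length := by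
        simp; omega
      have h1 : ((S ++ [e]).drop (i : ℕ))[(S ++ [e]).length - 1 - (i : ℕ)]'hpos = e := by
        rw [List.getElem_drop]
        have heq : (i : ℕ) + ((S ++ [e]).length - 1 - i) = S.length := by omega
        simp only [heq]
        exact hlast (by omega)
      have h2 := hp.getElem hpos
      rw [h1] at h2
      rw [List.getElem_drop] at h2
      have hidx : (j : ℕ) + ((S ++ [e]).length - 1 - i) < S.length := by omega
      rw [List.getElem_append_left hidx] at h2
      exact absurd (he _ (List.getElem_mem hidx)) (by rw [← h2]; exact lt_irrefl e)
    · have hlen := hp.length_le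
      simp only [List.length_drop] at hlen
      have hij' : (i : ℕ) = j := by have := j.isLt; omega
      have heq : (S ++ [e]).drop i = (S ++ [e]).drop j := by rw [hij']
      rw [heq] at hlex
      exact lex_irrefl' _ hlex
  constructor
  · intro r r' hrr'
    have hlex := hsort r r' hrr'
    have hnp := key _ _ hlex
    rw [List.rotate_eq_drop_append_take (σ r).isLt.le,
        List.rotate_eq_drop_append_take (σ r').isLt.le]
    exact lex_append' hlex hnp _ _
  · intro r
    have hnlt : (σ r : ℕ) < (S ++ [e]).length := (σ r).isLt
    rw [List.rotate_eq_drop_append_take hnlt.le]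
    rcases Nat.eq_zero_or_pos (σ r : ℕ) with h0 | hpos
    · simp only [h0, List.drop_zero, List.take_zero, List.append_nil]
      rw [List.getLast?_eq_getElem?]
      congr 1
      rw [Nat.zero_add, Nat.mod_eq_of_lt (by omega)]
    · have htake : (S ++ [e]).take (σ r : ℕ) ≠ [] := by
        simp [List.take_eq_nil_iff]
        omega
      rw [List.getLast?_append_of_ne_nil _ htake, List.getLast?_eq_getElem?,
          List.length_take, List.getElem?_take]
      have hmin : min (σ r : ℕ) (S ++ [e]).length = (σ r : ℕ) := by omega
      rw [hmin, if_pos (by omega : (σ r : ℕ) - 1 < (σ r : ℕ))]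
      congr 1
      have heq : ((σ r : ℕ) + (S ++ [e]).length - 1) = ((σ r : ℕ) - 1) + (S ++ [e]).length := by
        omega
      rw [heq, Nat.add_mod_right, Nat.mod_eq_of_lt (by omega)]
end

section
/- Let a, b, N be natural numbers with 1 ≤ a ≤ b ≤ N, and set K = b − a + 1. Then N · log₂ N − a · log₂ a − (N + 1 − b) · log₂(N + 1 − b) ≤ K · log₂ N + 3 · N (as real numbers). -/
lemma aux_xlog (x N : ℝ) (hx : 1 ≤ x) (hxN : x ≤ N) :
    x * (Real.logb 2 N - Real.logb 2 x) ≤ (3/2) * N := by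
  have hx0 : 0 < x := by linarith
  have hN0 : 0 < N := by linarith
  have h1 : Real.log N - Real.log x = Real.log (N / x) :=
    (Real.log_div (ne_of_gt hN0) (ne_of_gt hx0)).symm
  have h2 : Real.log (N / x) ≤ N / x - 1 := Real.log_le_sub_one_of_pos (by positivity)
  have hl2 : (2/3 : ℝ) ≤ Real.log 2 := by
    have := Real.log_two_gt_d9; linarith
  have hl2pos : (0:ℝ) < Real.log 2 := by linarith
  have key : x * (Real.log N - Real.log x) ≤ N - x := by
    rw [h1]
    calc x * Real.log (N / x) ≤ x * (N / x - 1) := by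
          exact mul_le_mul_of_nonneg_left h2 (le_of_lt hx0)
      _ = N - x := by field_simp
  have : x * (Real.logb 2 N - Real.logb 2 x) = x * (Real.log N - Real.log x) / Real.log 2 := by
    unfold Real.logb; ring
  rw [this]
  calc x * (Real.log N - Real.log x) / Real.log 2 ≤ (N - x) / Real.log 2 := by
        gcongr
    _ ≤ (N - x) / (2/3) := by
        apply div_le_div_of_nonneg_left (by linarith) (by norm_num) hl2
    _ = (3/2) * (N - x) := by ring
    _ ≤ (3/2) * N := by linarith

/-- For a segment of `K = b − a + 1` consecutive ranks `a, a+1, …, b` the optimal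
multi-selection bound `N log N − Σ_j Δ_j log Δ_j` (with `Δ₀ = a`, `Δ_K = N + 1 − b`, and
the remaining gaps equal to `1`) is at most `K·log₂ N + 3·N`. -/
theorem consecutive_ranks_bound (a b N : ℕ) (ha : 1 ≤ a) (hab : a ≤ b) (hbN : b ≤ N) :
    (N : ℝ) * Real.logb 2 N - (a : ℝ) * Real.logb 2 a
        - ((N : ℝ) + 1 - b) * Real.logb 2 ((N : ℝ) + 1 - b)
      ≤ ((b - a + 1 : ℕ) : ℝ) * Real.logb 2 N + 3 * N := by
  have haR : (1:ℝ) ≤ (a:ℝ) := by exact_mod_cast ha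
  have habR : (a:ℝ) ≤ (b:ℝ) := by exact_mod_cast hab
  have hbNR : (b:ℝ) ≤ (N:ℝ) := by exact_mod_cast hbN
  set m : ℝ := (N:ℝ) + 1 - b with hm
  clear_value m
  have hm1 : (1:ℝ) ≤ m := by simp [hm]; linarith
  have hmN : m ≤ (N:ℝ) := by simp [hm]; linarith
  have haN : (a:ℝ) ≤ (N:ℝ) := by linarith
  have hK : ((b - a + 1 : ℕ) : ℝ) = (b:ℝ) - a + 1 := by
    push_cast [Nat.cast_sub hab]; ring
  have h1 := aux_xlog (a:ℝ) (N:ℝ) haR haN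
  have h2 := aux_xlog m (N:ℝ) hm1 hmN
  have hL : 0 ≤ Real.logb 2 N := Real.logb_nonneg (by norm_num) (by linarith)
  rw [hK]
  have hprod : (N:ℝ) * Real.logb 2 N
      = ((b:ℝ) - a + 1) * Real.logb 2 N + (a:ℝ) * Real.logb 2 N + (m - 2) * Real.logb 2 N := by
    have hNeq : (N:ℝ) = ((b:ℝ) - a + 1) + (a:ℝ) + (m - 2) := by rw [hm]; ring
    rw [← hNeq] at *
    nlinarith [hNeq]
  linarith [h1, h2, hL, hprod]
end

section
/- Let c ≥ 0 be a real number and let f : ℕ → ℝ satisfy: f(0) ≤ 0; f(1) ≤ c; and for every n ≥ 2 there exist natural numbers n₁, n₂, s with n₁ + n₂ + s ≤ n, 2·n₁ ≤ n, 2·n₂ ≤ n, such that f(n) ≤ c·n + c·s·log₂ s + f(n₁) + f(n₂). Then f(n) ≤ c·n·log₂ n + c·n for every natural number n. -/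
lemma half_log_aux (k n : ℕ) (hn : 2 ≤ n) (hk : 2 * k ≤ n) :
    (k : ℝ) * Real.logb 2 k ≤ (k : ℝ) * (Real.logb 2 n - 1) := by
  rcases Nat.eq_zero_or_pos k with rfl | hk0
  · simp
  · have hkpos : (0:ℝ) < k := by exact_mod_cast hk0
    have hle : (k:ℝ) ≤ (n:ℝ)/2 := by
      rw [le_div_iff₀ (by norm_num)]
      exact_mod_cast (by omega : k*2 ≤ n)
    have := Real.logb_le_logb_of_le (b := 2) (by norm_num) hkpos hle
    have hdiv : Real.logb 2 ((n:ℝ)/2) = Real.logb 2 n - 1 := by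
      rw [Real.logb_div (by positivity) (by norm_num)]
      simp
    rw [hdiv] at this
    exact mul_le_mul_of_nonneg_left this (le_of_lt hkpos)

lemma s_log_aux (s n : ℕ) (hs : s ≤ n) :
    (s : ℝ) * Real.logb 2 s ≤ (s : ℝ) * Real.logb 2 n := by
  rcases Nat.eq_zero_or_pos s with rfl | hs0
  · simp
  · have : Real.logb 2 (s:ℝ) ≤ Real.logb 2 (n:ℝ) :=
      Real.logb_le_logb_of_le (by norm_num) (by exact_mod_cast hs0) (by exact_mod_cast hs)
    exact mul_le_mul_of_nonneg_left this (by positivity)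

/-- Divide-and-conquer recurrence for the multi-selection algorithm on multisets: if
`f 0 ≤ 0`, `f 1 ≤ c`, and for every `n ≥ 2` there are `n₁, n₂, s` with
`n₁ + n₂ + s ≤ n`, `2·n₁ ≤ n`, `2·n₂ ≤ n` and
`f n ≤ c·n + c·s·log₂ s + f n₁ + f n₂`, then `f n ≤ c·n·log₂ n + c·n` for all `n`. -/
theorem mselmset_recurrence (c : ℝ) (hc : 0 ≤ c) (f : ℕ → ℝ)
    (h0 : f 0 ≤ 0) (h1 : f 1 ≤ c)
    (hrec : ∀ n : ℕ, 2 ≤ n → ∃ n₁ n₂ s : ℕ,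
      n₁ + n₂ + s ≤ n ∧ 2 * n₁ ≤ n ∧ 2 * n₂ ≤ n ∧
      f n ≤ c * n + c * s * Real.logb 2 s + f n₁ + f n₂) :
    ∀ n : ℕ, f n ≤ c * n * Real.logb 2 n + c * n := by
  intro n
  induction n using Nat.strong_induction_on with
  | _ n ih =>
    match n with
    | 0 => simpa using h0
    | 1 => simpa using h1
    | (m + 2) =>
      set n := m + 2 with hn
      have hn2 : 2 ≤ n := by omega
      obtain ⟨n₁, n₂, s, hsum, h₁, h₂, hf⟩ := hrec n hn2
      have ih1 := ih n₁ (by omega)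
      have ih2 := ih n₂ (by omega)
      have k1 := half_log_aux n₁ n hn2 h₁
      have k2 := half_log_aux n₂ n hn2 h₂
      have k3 := s_log_aux s n (by omega)
      have hlogn : (1:ℝ) ≤ Real.logb 2 n := by
        rw [show (1:ℝ) = Real.logb 2 2 by simp]
        exact Real.logb_le_logb_of_le (by norm_num) (by norm_num) (by exact_mod_cast hn2)
      have hcast : (n₁:ℝ) + n₂ + s ≤ n := by exact_mod_cast hsum
      have hn1 : (0:ℝ) ≤ n₁ := by positivity
      have hn2' : (0:ℝ) ≤ n₂ := by positivity
      have hs' : (0:ℝ) ≤ s := by positivity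
      nlinarith [mul_le_mul_of_nonneg_left k1 hc, mul_le_mul_of_nonneg_left k2 hc,
        mul_le_mul_of_nonneg_left k3 hc,
        mul_le_mul_of_nonneg_right (mul_le_mul_of_nonneg_left hcast hc) (by linarith : (0:ℝ) ≤ Real.logb 2 n)]
end

section
/- Let α be a linear order, M a multiset over α with card M = N, and let r₁ < r₂ < ⋯ < r_K be natural numbers with K ≥ 1 and 1 ≤ r_i ≤ N for each i. Then there exist t ≤ K, elements p₁ < p₂ < ⋯ < p_t of M, and multisets M₀, F₁, M₁, …, F_t, M_t over α such that: (a) M = M₀ + F₁ + M₁ + ⋯ + F_t + M_t; (b) for each i, F_i consists of exactly count(p_i, M) copies of p_i (all elements of F_i equal p_i, with multiplicity equal to the multiplicity of p_i in M); (c) every element of M₀ is strictly less than p₁, and for each 1 ≤ i ≤ t every element of M_i is strictly greater than p_i and (for i < t) strictly less than p_{i+1}; (d) for every rank r_x there exists j with card{y ∈ M : y < p_j} < r_x ≤ card{y ∈ M : y ≤ p_j} (that is, the element of rank r_x in M is p_j); and (e) for every j with 1 ≤ j ≤ t there exists a rank r_x with card{y ∈ M : y < p_j} < r_x ≤ card{y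 ∈ M : y ≤ p_j}. -/
/-!
An element of rank `r` exists for every `1 ≤ r ≤ card M`: the least `a` with at least `r`
elements of `M` below or at it. Collecting, for each requested rank, such an element gives a
finite set of pivots; listing it increasingly, `M` splits into the blocks strictly below the
first pivot, equal to a pivot, and strictly between consecutive pivots (or above the last one),
obtained by peeling off the smallest pivot and recursing on the elements above it.
-/

namespace Multiset

variable {α : Type*} [LinearOrder α]

def HasRank (M : Multiset α) (a : α) (r : ℕ) : Prop :=
  card (M.filter (· < a)) < r ∧ r ≤ card (M.filter (· ≤ a))

theorem exists_mem_hasRank (M : Multiset α) {r : ℕ} (hr : 1 ≤ r) (hrM : r ≤ card M) :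
    ∃ a ∈ M, M.HasRank a r := by
  set S := M.toFinset.filter fun a => r ≤ card (M.filter (· ≤ a))
  have hS : S.Nonempty := by
    have hM : M.toFinset.Nonempty := by
      rw [toFinset_nonempty, ← card_pos]; omega
    refine ⟨M.toFinset.max' hM, Finset.mem_filter.mpr ⟨Finset.max'_mem _ hM, ?_⟩⟩
    rwa [filter_eq_self.mpr fun y hy => M.toFinset.le_max' y (mem_toFinset.mpr hy)]
  obtain ⟨haM, hra⟩ := Finset.mem_filter.mp (S.min'_mem hS)
  refine ⟨S.min' hS, mem_toFinset.mp haM, lt_of_not_ge fun hlt => ?_, hra⟩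
  -- otherwise the largest element below `S.min' hS` would already lie in `S`
  set a := S.min' hS
  have hB : (M.filter (· < a)).toFinset.Nonempty := by
    rw [toFinset_nonempty, ← card_pos]; omega
  set b := (M.filter (· < a)).toFinset.max' hB
  have hb : b ∈ M ∧ b < a := mem_filter.mp (mem_toFinset.mp (Finset.max'_mem _ hB))
  have hfilter : M.filter (· ≤ b) = M.filter (· < a) :=
    filter_congr fun y hy =>
      ⟨fun hyb => hyb.trans_lt hb.2, fun hya => Finset.le_max' _ _ (by simp [hy, hya])⟩
  have hbS : b ∈ S := Finset.mem_filter.mpr ⟨mem_toFinset.mpr hb.1, hfilter ▸ hlt⟩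
  exact (S.min'_le b hbS).not_gt hb.2

theorem filter_lt_add_replicate_add_filter_gt (M : Multiset α) (a : α) :
    M.filter (· < a) + replicate (count a M) a + M.filter (a < ·) = M := by
  ext b
  simp only [count_add, count_filter, count_replicate]
  rcases lt_trichotomy b a with h | rfl | h
  · simp [h, h.ne', h.not_gt]
  · simp
  · simp [h, h.ne, h.not_gt]

theorem exists_pivotal_decomposition (M : Multiset α) {t : ℕ} (p : Fin t → α)
    (hp : StrictMono p) :
    ∃ (M0 : Multiset α) (F Mi : Fin t → Multiset α),
      M = M0 + ∑ i : Fin t, (F i + Mi i) ∧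
      (∀ i, F i = replicate (count (p i) M) (p i)) ∧
      (∀ x ∈ M0, ∀ h : 0 < t, x < p ⟨0, h⟩) ∧
      (∀ i : Fin t, ∀ x ∈ Mi i,
        p i < x ∧ ∀ h : (i : ℕ) + 1 < t, x < p ⟨(i : ℕ) + 1, h⟩) := by
  induction t generalizing M with
  | zero => exact ⟨M, 0, 0, by simp, fun i => i.elim0, by simp, fun i => i.elim0⟩
  | succ t ih =>
    obtain ⟨M0, F, Mi, hsplit, hF, hM0, hMi⟩ :=
      ih (M.filter (p 0 < ·)) (Fin.tail p) (hp.comp Fin.strictMono_succ)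
    refine ⟨M.filter (· < p 0), Fin.cons (replicate (count (p 0) M) (p 0)) F, Fin.cons M0 Mi,
      ?_, Fin.cases rfl fun i => ?_, fun x hx _ => (mem_filter.mp hx).2, Fin.cases ?_ ?_⟩
    · rw [Fin.sum_univ_succ]
      simp only [Fin.cons_zero, Fin.cons_succ]
      conv_lhs => rw [← M.filter_lt_add_replicate_add_filter_gt (p 0), hsplit]
      simp only [add_assoc]
    · rw [Fin.cons_succ, hF, Fin.tail, count_filter_of_pos (hp (Fin.succ_pos i))]
    · intro x hx
      have hxM : x ∈ M.filter (p 0 < ·) := hsplit ▸ mem_add.mpr (Or.inl hx)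
      exact ⟨(mem_filter.mp hxM).2, fun h => hM0 x hx (by omega)⟩
    · intro i x hx
      obtain ⟨hlt, hnext⟩ := hMi i x hx
      exact ⟨hlt, fun h => hnext (by simp only [Fin.val_succ] at h; omega)⟩

end Multiset

theorem mselmset_pivotal_decomposition_general {α : Type*} [LinearOrder α]
    (M : Multiset α) (N K : ℕ) (hN : Multiset.card M = N)
    (r : Fin K → ℕ)
    (hr1 : ∀ i, 1 ≤ r i) (hrN : ∀ i, r i ≤ N) :
    ∃ t : ℕ, t ≤ K ∧
      ∃ (p : Fin t → α) (M0 : Multiset α) (F Mi : Fin t → Multiset α),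
        StrictMono p ∧ (∀ i, p i ∈ M) ∧
        (M = M0 + ∑ i : Fin t, (F i + Mi i)) ∧
        (∀ i, F i = Multiset.replicate (Multiset.count (p i) M) (p i)) ∧
        (∀ x ∈ M0, ∀ h : 0 < t, x < p ⟨0, h⟩) ∧
        (∀ i : Fin t, ∀ x ∈ Mi i,
          p i < x ∧ ∀ h : (i : ℕ) + 1 < t, x < p ⟨(i : ℕ) + 1, h⟩) ∧
        (∀ x : Fin K, ∃ j : Fin t,
          Multiset.card (M.filter (fun y => y < p j)) < r x ∧
          r x ≤ Multiset.card (M.filter (fun y => y ≤ p j))) ∧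
        (∀ j : Fin t, ∃ x : Fin K,
          Multiset.card (M.filter (fun y => y < p j)) < r x ∧
          r x ≤ Multiset.card (M.filter (fun y => y ≤ p j))) := by
  choose a haM ha using fun x => M.exists_mem_hasRank (hr1 x) (hN ▸ hrN x)
  set P := Finset.univ.image a
  set p := P.orderEmbOfFin rfl
  have hp_rank : ∀ j, ∃ x, a x = p j := fun j => by
    simpa [P] using Finset.mem_image.mp (P.orderEmbOfFin_mem rfl j)
  obtain ⟨M0, F, Mi, hsplit, hF, hM0, hMi⟩ := M.exists_pivotal_decomposition p p.strictMono
  refine ⟨P.card, Finset.card_image_le.trans (by simp), p, M0, F, Mi, p.strictMono,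
    fun j => ?_, hsplit, hF, hM0, hMi, fun x => ?_, fun j => ?_⟩
  · obtain ⟨x, hx⟩ := hp_rank j
    exact hx ▸ haM x
  · obtain ⟨j, hj⟩ : a x ∈ Set.range p := by
      rw [Finset.range_orderEmbOfFin]; exact Finset.mem_image_of_mem a (Finset.mem_univ x)
    exact ⟨j, hj ▸ ha x⟩
  · obtain ⟨x, hx⟩ := hp_rank j
    exact ⟨x, hx ▸ ha x⟩

/-- Correctness of the multiset multi-selection (`MselMset`): any multiset `M` of
cardinality `N` over a linear order, with requested ranks `r₁ < ⋯ < r_K`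
(`K ≥ 1`, `1 ≤ rᵢ ≤ N`), decomposes into its pivotal multisets
`M₀, F₁, M₁, …, F_t, M_t` around pivots `p₁ < ⋯ < p_t` (`t ≤ K`) satisfying (a)–(e). -/
theorem mselmset_pivotal_decomposition {α : Type*} [LinearOrder α]
    (M : Multiset α) (N K : ℕ) (hN : Multiset.card M = N) (hK : 1 ≤ K)
    (r : Fin K → ℕ) (hr : StrictMono r)
    (hr1 : ∀ i, 1 ≤ r i) (hrN : ∀ i, r i ≤ N) :
    ∃ t : ℕ, t ≤ K ∧
      ∃ (p : Fin t → α) (M0 : Multiset α) (F Mi : Fin t → Multiset α),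
        StrictMono p ∧ (∀ i, p i ∈ M) ∧
        (M = M0 + ∑ i : Fin t, (F i + Mi i)) ∧
        (∀ i, F i = Multiset.replicate (Multiset.count (p i) M) (p i)) ∧
        (∀ x ∈ M0, ∀ h : 0 < t, x < p ⟨0, h⟩) ∧
        (∀ i : Fin t, ∀ x ∈ Mi i,
          p i < x ∧ ∀ h : (i : ℕ) + 1 < t, x < p ⟨(i : ℕ) + 1, h⟩) ∧
        (∀ x : Fin K, ∃ j : Fin t,
          Multiset.card (M.filter (fun y => y < p j)) < r x ∧
          r x ≤ Multiset.card (M.filter (fun y => y ≤ p j))) ∧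
        (∀ j : Fin t, ∃ x : Fin K,
          Multiset.card (M.filter (fun y => y < p j)) < r x ∧
          r x ≤ Multiset.card (M.filter (fun y => y ≤ p j))) :=
  mselmset_pivotal_decomposition_general M N K hN r hr1 hrN
end
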